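/- arXiv:1502.07163 — 5 statements merged into one kernel-verified Lean document; each statement's English description precedes it below -/
import Mathlib

section
/- Let G be a finite group acting quasi-transitively on a finite set Ω with constant two-point stabilizer order t > 1. If α, β ∈ Ω lie in different orbits of G, then the subdegrees |G_α| / t and |G_β| / t are coprime natural numbers. -/
open MulAction

/-- Auxiliary lemma: if `p * t` divides the order of the stabilizer of `α`, then there is a
Sylow `p`-subgroup of `G` whose fixed point set on `Ω` is exactly `{α}`. -/
lemma exists_sylow_fixedPoints_eq_singleton
    {G Ω : Type*} [Group G] [Fintype G] [Fintype Ω] [MulAction G Ω]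
    (t : ℕ) (ht0 : t ≠ 0)
    (hqt : ∀ α β : Ω, α ≠ β →
      Nat.card ↥(MulAction.stabilizer G α ⊓ MulAction.stabilizer G β) = t)
    (p : ℕ) [hp : Fact p.Prime] (α : Ω)
    (hpt : p * t ∣ Nat.card ↥(MulAction.stabilizer G α)) :
    ∃ P : Sylow p G, MulAction.fixedPoints P Ω = {α} := by
  classical
  set S := MulAction.stabilizer G α with hS
  obtain ⟨Pα⟩ : Nonempty (Sylow p S) := inferInstance
  set K : Subgroup G := (Pα : Subgroup S).map S.subtype with hKdef
  have hK : IsPGroup p K := Pα.isPGroup'.map S.subtype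
  have hcardK : Nat.card K = Nat.card Pα :=
    (Nat.card_congr (Subgroup.equivMapOfInjective (Pα : Subgroup S) S.subtype
      S.subtype_injective).toEquiv).symm
  have hScard : Nat.card S ≠ 0 := Nat.card_pos.ne'
  -- `p ^ (t.factorization p + 1)` divides `Nat.card K`
  have hpk : p ^ (t.factorization p + 1) ∣ Nat.card K := by
    rw [hcardK, Pα.card_eq_multiplicity]
    have h1 : p ^ (t.factorization p + 1) ∣ p * t := by
      rw [pow_succ']
      exact mul_dvd_mul_left p (Nat.ordProj_dvd t p)
    exact pow_dvd_pow p
      ((Nat.Prime.pow_dvd_iff_le_factorization hp.out hScard).mp (h1.trans hpt))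
  have hKndvd : ¬ (Nat.card K ∣ t) := fun h =>
    Nat.pow_succ_factorization_not_dvd ht0 hp.out (hpk.trans h)
  have hKle : K ≤ S := by
    rintro x ⟨y, _, rfl⟩
    exact y.2
  -- fixed points of K are exactly {α}
  have hKfix : MulAction.fixedPoints K Ω = {α} := by
    ext γ
    constructor
    · intro hγ
      by_contra hne
      have hne' : γ ≠ α := hne
      have hle : K ≤ MulAction.stabilizer G α ⊓ MulAction.stabilizer G γ := by
        refine le_inf hKle ?_
        intro x hx
        exact hγ ⟨x, hx⟩
      have := (Subgroup.card_dvd_of_le hle)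
      rw [hqt α γ (Ne.symm hne')] at this
      exact hKndvd this
    · rintro rfl
      intro x
      exact hKle x.2
  obtain ⟨P, hle⟩ := hK.exists_le_sylow
  have hsub : MulAction.fixedPoints P Ω ⊆ MulAction.fixedPoints K Ω := by
    intro ω hω x
    exact hω ⟨(x : G), hle x.2⟩
  have h1 : Nat.card (MulAction.fixedPoints K Ω) = 1 := by
    rw [hKfix]; simp
  have hmodK : Nat.card Ω ≡ 1 [MOD p] := by
    have := hK.card_modEq_card_fixedPoints Ω
    rwa [h1] at this
  have hmodP : Nat.card (MulAction.fixedPoints P Ω) ≡ 1 [MOD p] :=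
    (P.isPGroup'.card_modEq_card_fixedPoints Ω).symm.trans hmodK
  have hne : (MulAction.fixedPoints P Ω).Nonempty := by
    by_contra h
    rw [Set.not_nonempty_iff_eq_empty] at h
    rw [h] at hmodP
    simp only [Nat.card_eq_fintype_card] at hmodP
    have : Nat.card (∅ : Set Ω) = 0 := by simp
    rw [h] at hsub
    have h0 : (0 : ℕ) ≡ 1 [MOD p] := by
      simpa [this] using hmodP
    have : p ∣ 1 := (Nat.modEq_iff_dvd' (by norm_num)).mp h0
    exact hp.out.one_lt.ne' (Nat.eq_one_of_dvd_one this)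
  refine ⟨P, ?_⟩
  have := (Set.subset_singleton_iff_eq.mp (hKfix ▸ hsub))
  rcases this with h | h
  · exact absurd h (Set.Nonempty.ne_empty hne)
  · exact h

/-- For a finite quasi-transitive group with constant two-point stabilizer order `t > 1`,
the subdegrees `|G_α| / t` and `|G_β| / t` attached to distinct orbits are coprime. -/
theorem quasiTransitive_subdegrees_coprime
    {G Ω : Type*} [Group G] [Fintype G] [Fintype Ω] [MulAction G Ω] [FaithfulSMul G Ω]
    (t : ℕ) (ht : 1 < t)
    (hqt : ∀ α β : Ω, α ≠ β →
      Nat.card ↥(MulAction.stabilizer G α ⊓ MulAction.stabilizer G β) = t)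
    (α β : Ω) (hdiff : MulAction.orbit G α ≠ MulAction.orbit G β) :
    Nat.Coprime (Nat.card ↥(MulAction.stabilizer G α) / t)
      (Nat.card ↥(MulAction.stabilizer G β) / t) := by
  classical
  have ht0 : t ≠ 0 := by omega
  have hne : α ≠ β := by rintro rfl; exact hdiff rfl
  by_contra hcop
  obtain ⟨p, hp, hpd⟩ := Nat.exists_prime_and_dvd hcop
  haveI : Fact p.Prime := ⟨hp⟩
  have hpα : p ∣ Nat.card ↥(MulAction.stabilizer G α) / t :=
    hpd.trans (Nat.gcd_dvd_left _ _)
  have hpβ : p ∣ Nat.card ↥(MulAction.stabilizer G β) / t :=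
    hpd.trans (Nat.gcd_dvd_right _ _)
  have htα : t ∣ Nat.card ↥(MulAction.stabilizer G α) := by
    rw [← hqt α β hne]
    exact Subgroup.card_dvd_of_le inf_le_left
  have htβ : t ∣ Nat.card ↥(MulAction.stabilizer G β) := by
    rw [← hqt β α hne.symm]
    exact Subgroup.card_dvd_of_le inf_le_left
  have hptα : p * t ∣ Nat.card ↥(MulAction.stabilizer G α) := by
    obtain ⟨k, hk⟩ := htα
    obtain ⟨m, hm⟩ : p ∣ k := by
      rwa [hk, Nat.mul_div_cancel_left k (by omega : 0 < t)] at hpα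
    exact ⟨m, by rw [hk, hm]; ring⟩
  have hptβ : p * t ∣ Nat.card ↥(MulAction.stabilizer G β) := by
    obtain ⟨k, hk⟩ := htβ
    obtain ⟨m, hm⟩ : p ∣ k := by
      rwa [hk, Nat.mul_div_cancel_left k (by omega : 0 < t)] at hpβ
    exact ⟨m, by rw [hk, hm]; ring⟩
  obtain ⟨P, hP⟩ := exists_sylow_fixedPoints_eq_singleton t ht0 hqt p α hptα
  obtain ⟨Q, hQ⟩ := exists_sylow_fixedPoints_eq_singleton t ht0 hqt p β hptβ
  obtain ⟨g, hg⟩ := MulAction.exists_smul_eq G P Q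
  -- β is fixed by Q = g • P, so g⁻¹ • β is fixed by P
  have hβQ : β ∈ MulAction.fixedPoints Q Ω := by rw [hQ]; rfl
  have hmem : g⁻¹ • β ∈ MulAction.fixedPoints P Ω := by
    intro x
    have hx : g * (x : G) * g⁻¹ ∈ (Q : Subgroup G) := by
      rw [← hg]
      rw [Sylow.smul_def]
      exact Subgroup.smul_mem_pointwise_smul _ _ _ x.2
    have := hβQ ⟨g * (x : G) * g⁻¹, hx⟩
    have h2 : (g * (x : G) * g⁻¹) • β = β := this
    calc (x : G) • g⁻¹ • β = g⁻¹ • (g * (x : G) * g⁻¹) • β := by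
          simp [mul_smul]
      _ = g⁻¹ • β := by rw [h2]
  rw [hP] at hmem
  have : β = g • α := by
    have h3 : g⁻¹ • β = α := hmem
    rw [← h3]; simp
  apply hdiff
  rw [MulAction.orbit_eq_iff.mpr ⟨g, this.symm⟩]
end

section
/- Let G be a finite group acting quasi-transitively on a finite set Ω. Then distinct orbits of G on Ω have distinct cardinalities: if α, β ∈ Ω lie in different orbits, then the orbit of α and the orbit of β have different sizes. -/
open MulAction

/-- If all stabilizers of a finite group action have the same cardinality `t`,
then `|X| * t` is a multiple of `|H|`. -/
lemma aux_sum_stab {H X : Type*} [Group H] [Fintype H] [Finite X] [MulAction H X]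
    {t : ℕ} (h : ∀ x : X, Nat.card (stabilizer H x) = t) :
    ∃ k, Nat.card X * t = k * Nat.card H := by
  classical
  have : Fintype X := Fintype.ofFinite X
  have : Fintype (orbitRel.Quotient H X) := Fintype.ofFinite _
  refine ⟨Fintype.card (orbitRel.Quotient H X), ?_⟩
  have key : ∀ ω : orbitRel.Quotient H X,
      Fintype.card (orbit H ω.out) * t = Fintype.card H := by
    intro ω
    have h1 := card_orbit_mul_card_stabilizer_eq_card_group H ω.out
    rw [← h1]
    congr 1
    rw [← Nat.card_eq_fintype_card, h]
  rw [Nat.card_eq_fintype_card, Nat.card_eq_fintype_card,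
    Fintype.card_congr (selfEquivSigmaOrbits H X), Fintype.card_sigma, Finset.sum_mul]
  rw [Finset.sum_congr rfl (fun ω _ => key ω), Finset.sum_const, Finset.card_univ, smul_eq_mul]

/-- The stabilizer of a point of a `SubMulAction` of a subgroup corresponds to
the intersection of subgroups. -/
lemma aux_stab_card {G Ω : Type*} [Group G] [MulAction G Ω] (H : Subgroup G)
    (p : SubMulAction H Ω) (x : p) :
    Nat.card (stabilizer H x) = Nat.card ↥(H ⊓ stabilizer G (x : Ω)) := by
  apply Nat.card_congr
  have hmem : ∀ (h : H), h ∈ stabilizer H x ↔ (h : G) ∈ stabilizer G (x : Ω) := by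
    intro h
    simp only [mem_stabilizer_iff]
    constructor
    · intro hh; exact congrArg Subtype.val hh
    · intro hh; exact Subtype.ext hh
  exact
    { toFun := fun g => ⟨g.1.1, g.1.2, (hmem g.1).mp g.2⟩
      invFun := fun g => ⟨⟨g.1, g.2.1⟩, (hmem _).mpr g.2.2⟩
      left_inv := fun g => rfl
      right_inv := fun g => rfl }

/-- Distinct orbits of a finite quasi-transitive group have distinct cardinalities. -/
theorem quasiTransitive_distinct_orbit_cards
    {G Ω : Type*} [Group G] [Fintype G] [Fintype Ω] [MulAction G Ω] [FaithfulSMul G Ω]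
    (t : ℕ) (ht : 1 < t)
    (hqt : ∀ α β : Ω, α ≠ β →
      Nat.card ↥(MulAction.stabilizer G α ⊓ MulAction.stabilizer G β) = t)
    (α β : Ω) (hdiff : MulAction.orbit G α ≠ MulAction.orbit G β) :
    Nat.card ↥(MulAction.orbit G α) ≠ Nat.card ↥(MulAction.orbit G β) := by
  classical
  intro hcard
  set H := stabilizer G α with hH
  have hαβ : α ≠ β := fun h => hdiff (by rw [h])
  have hne_orbitβ : ∀ x ∈ orbit G β, x ≠ α := by
    intro x hx h
    subst h
    exact hdiff (orbit_eq_iff.mpr hx)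
  -- the H-set: orbit of β
  have smul_mem₁ : ∀ (c : H) {x : Ω}, x ∈ orbit G β → c • x ∈ orbit G β := by
    intro c x hx
    obtain ⟨g, rfl⟩ := mem_orbit_iff.mp hx
    exact mem_orbit_iff.mpr ⟨(c : G) * g, (mul_smul _ _ _)⟩
  let p₁ : SubMulAction H Ω := ⟨orbit G β, smul_mem₁⟩
  -- the H-set: orbit of α minus α
  have smul_mem₂ : ∀ (c : H) {x : Ω}, x ∈ orbit G α \ {α} → c • x ∈ orbit G α \ {α} := by
    intro c x hx
    obtain ⟨hx1, hx2⟩ := hx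
    constructor
    · obtain ⟨g, rfl⟩ := mem_orbit_iff.mp hx1
      exact mem_orbit_iff.mpr ⟨(c : G) * g, (mul_smul _ _ _)⟩
    · intro hcx
      apply hx2
      have hc : (c : G) • α = α := c.2
      have hcx' : (c : G) • x = α := hcx
      have hinv : (c : G)⁻¹ • α = α := inv_smul_eq_iff.mpr hc.symm
      have hxα : x = α := by
        calc x = (c : G)⁻¹ • ((c : G) • x) := (inv_smul_smul _ _).symm
          _ = (c : G)⁻¹ • α := by rw [hcx']
          _ = α := hinv
      exact hxα ▸ rfl
  let p₂ : SubMulAction H Ω := ⟨orbit G α \ {α}, smul_mem₂⟩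
  obtain ⟨k₁, hk₁⟩ := aux_sum_stab (H := H) (X := p₁) (t := t) (by
    intro x
    rw [aux_stab_card]
    exact hqt α x.1 (Ne.symm (hne_orbitβ x.1 x.2)))
  obtain ⟨k₂, hk₂⟩ := aux_sum_stab (H := H) (X := p₂) (t := t) (by
    intro x
    rw [aux_stab_card]
    exact hqt α x.1 (Ne.symm x.2.2))
  set n := Nat.card ↥(orbit G α) with hn
  set s := Nat.card H with hs
  have hne : Nonempty ↥(orbit G α) := ⟨⟨α, mem_orbit_self α⟩⟩
  have hn1' : 0 < n := Nat.card_pos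
  have hcard₁ : Nat.card p₁ = n := by
    have : Nat.card p₁ = Nat.card ↥(orbit G β) := rfl
    rw [this, ← hcard]
  have hcard₂ : Nat.card p₂ = n - 1 := by
    have h1 : Nat.card p₂ = (orbit G α \ {α} : Set Ω).ncard := (Nat.card_coe_set_eq _)
    have h2 : (orbit G α \ {α} : Set Ω).ncard = (orbit G α : Set Ω).ncard - 1 :=
      Set.ncard_diff_singleton_of_mem (mem_orbit_self α)
    rw [h1, h2, ← Nat.card_coe_set_eq]
  rw [hcard₁] at hk₁
  rw [hcard₂] at hk₂
  -- t ≤ s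
  have hts : t ≤ s := by
    rw [← hqt α β hαβ]
    exact Subgroup.card_le_of_le inf_le_left
  have hspos : 0 < s := Nat.card_pos
  have htpos : 0 < t := lt_trans Nat.zero_lt_one ht
  -- arithmetic: s = t
  have h5 : k₂ * s + t = k₁ * s := by
    have h6 : (n - 1) + 1 = n := Nat.succ_pred_eq_of_pos hn1'
    calc k₂ * s + t = (n - 1) * t + t := by rw [hk₂]
      _ = ((n - 1) + 1) * t := (Nat.succ_mul _ _).symm
      _ = n * t := by rw [h6]
      _ = k₁ * s := hk₁
  have hlt : k₂ < k₁ := by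
    by_contra hcon
    push_neg at hcon
    have := Nat.mul_le_mul_right s hcon
    omega
  have hst : s ≤ t := by
    have := Nat.mul_le_mul_right s hlt
    rw [Nat.succ_mul] at this
    omega
  have hseqt : s = t := le_antisymm hst hts
  -- contradiction: H acts trivially, so H = ⊥, so t = 1
  have hHbot : H = ⊥ := by
    rw [Subgroup.eq_bot_iff_forall]
    intro g hg
    refine eq_of_smul_eq_smul (M := G) (α := Ω) (fun γ => ?_)
    rw [one_smul]
    by_cases hγ : γ = α
    · subst hγ; exact hg
    · have hineq : Nat.card H ≤ Nat.card ↥(H ⊓ stabilizer G γ) := by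
        rw [hqt α γ (Ne.symm hγ), ← hseqt]
      have h7 : H ⊓ stabilizer G γ = H :=
        Subgroup.eq_of_le_of_card_ge inf_le_left hineq
      have h8 : H ≤ stabilizer G γ := h7 ▸ inf_le_right
      exact h8 hg
  have : s = 1 := by rw [hs, hHbot, Subgroup.card_bot]
  omega
end

section
/- Let G be a finite group acting quasi-transitively but not transitively on a finite set Ω. Then G acts primitively on each orbit: for every orbit Δ of G on Ω, the induced (faithful, transitive) action of G on Δ is preprimitive. -/
/-!
Let `Δ` be an orbit with a nontrivial block, and let `t` be the common order of the two-point
stabilizers. Every orbit of `G_α` on `Ω \ {α}` has length `|G_α| / t`. For a block `C` not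
containing `α`, applying this to the block of `α` minus `α`, and the same count for
`G_α ∩ G_{C}` acting on `C`, shows that `|G_α ∩ G_{C}| / t` divides both `|C| - 1` and `|C|`;
hence `G_α ∩ G_{C} = G_{αγ}` for every `γ ∈ C`. As all two-point stabilizers have the same
order, this forces each of them, for points of `Δ`, to be the kernel `K` of `G` on `Δ`.
By faithfulness `K`, of order `t > 1`, moves some `ω ∉ Δ`. The subgroups `G_{ρω}` (`ρ ∈ Δ`)
of `G_ω` pairwise meet in `K ∩ G_ω < K`, which makes `G_ω` too large to have two orbits on `Δ`:
`|G_ω| = t |Δ|`, hence `|G_α| = t |ωᴳ|`. Then `|ωᴳ|` divides `|Δ| - 1` and `|Δ|` divides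
`|ωᴳ| - 1`, which is absurd.
-/

open MulAction Pointwise

theorem card_dvd_mul_card_of_card_stabilizer_eq {H X : Type*} [Group H] [MulAction H X]
    [Finite H] [Finite X] {t : ℕ} (h : ∀ x : X, Nat.card (stabilizer H x) = t) :
    Nat.card H ∣ t * Nat.card X := by
  have := Fintype.ofFinite (orbitRel.Quotient H X)
  rw [Nat.card_congr (selfEquivSigmaOrbitsQuotientStabilizer H X), Nat.card_sigma, Finset.mul_sum]
  exact Finset.dvd_sum fun ω _ => h ω.out ▸ (stabilizer H ω.out).card_mul_index.symm.dvd

section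

variable {G Ω : Type*} [Group G] [MulAction G Ω]

theorem Subgroup.card_stabilizer_eq_card_inf (H : Subgroup G) (x : Ω) :
    Nat.card (stabilizer H x) = Nat.card ↥(H ⊓ stabilizer G x) :=
  Nat.card_congr
    { toFun s := ⟨s.1, s.1.2, s.2⟩
      invFun y := ⟨⟨y.1, y.2.1⟩, y.2.2⟩ }

theorem stabilizer_coe_orbit {a : Ω} (x : orbit G a) :
    stabilizer G x = stabilizer G (x : Ω) := by
  ext g
  simp only [mem_stabilizer_iff, Subtype.ext_iff, orbit.coe_smul]

theorem Subgroup.card_dvd_mul_ncard [Finite G] [Finite Ω] (H : Subgroup G) {S : Set Ω} {t : ℕ}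
    (hS : ∀ h ∈ H, ∀ x ∈ S, h • x ∈ S)
    (hSt : ∀ x ∈ S, Nat.card ↥(H ⊓ stabilizer G x) = t) :
    Nat.card H ∣ t * S.ncard :=
  let p : SubMulAction H Ω := ⟨S, fun h _ hx => hS h h.2 _ hx⟩
  card_dvd_mul_card_of_card_stabilizer_eq (X := p) fun x => by
    rw [SubMulAction.stabilizer_of_subMul, H.card_stabilizer_eq_card_inf, hSt x x.2]

theorem Subgroup.sum_card_sub_card_add_card_le [Finite G] {ι : Type*} (s : Finset ι)
    (A : ι → Subgroup G) {H N : Subgroup G} (hAH : ∀ i ∈ s, A i ≤ H) (hNH : N ≤ H)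
    (hA : ∀ i ∈ s, ∀ j ∈ s, i ≠ j → A i ⊓ A j ≤ N) :
    ∑ i ∈ s, (Nat.card (A i) - Nat.card N) + Nat.card N ≤ Nat.card H := by
  classical
  have := Fintype.ofFinite G
  let F : Subgroup G → Finset G := fun K => (K : Set G).toFinset
  have hF : ∀ K : Subgroup G, Nat.card K = (F K).card := fun K => Nat.card_eq_card_toFinset _
  have hdisj : (s : Set ι).PairwiseDisjoint fun i => F (A i) \ F N := by
    intro i hi j hj hij
    refine Finset.disjoint_left.mpr fun g hgi hgj => ?_
    simp only [F, Finset.mem_sdiff, Set.mem_toFinset, SetLike.mem_coe] at hgi hgj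
    exact hgi.2 (hA i hi j hj hij ⟨hgi.1, hgj.1⟩)
  calc ∑ i ∈ s, (Nat.card (A i) - Nat.card N) + Nat.card N
      ≤ ∑ i ∈ s, (F (A i) \ F N).card + (F N).card := by
        simp only [hF]; gcongr; exact Finset.le_card_sdiff _ _
    _ = (s.biUnion (fun i => F (A i) \ F N) ∪ F N).card := by
        rw [Finset.card_union_of_disjoint, Finset.card_biUnion hdisj]
        simp only [Finset.disjoint_left, Finset.mem_biUnion, Finset.mem_sdiff]
        rintro g ⟨i, -, -, hg⟩; exact hg
    _ ≤ (F H).card := by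
        refine Finset.card_le_card fun g hg => ?_
        simp only [F, Finset.mem_union, Finset.mem_biUnion, Finset.mem_sdiff, Set.mem_toFinset,
          SetLike.mem_coe] at hg ⊢
        rcases hg with ⟨i, hi, hg, -⟩ | hg
        · exact hAH i hi hg
        · exact hNH hg
    _ = Nat.card H := (hF H).symm

variable (G Ω) in
def TwoPointStabilizersHaveCard (t : ℕ) : Prop :=
  ∀ α β : Ω, α ≠ β → Nat.card ↥(stabilizer G α ⊓ stabilizer G β) = t

variable [Finite G] {t : ℕ}

theorem stabilizer_inf_eq_of_le (hqt : TwoPointStabilizersHaveCard G Ω t) {α β γ δ : Ω}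
    (hαβ : α ≠ β) (hγδ : γ ≠ δ)
    (h : stabilizer G α ⊓ stabilizer G β ≤ stabilizer G γ ⊓ stabilizer G δ) :
    stabilizer G α ⊓ stabilizer G β = stabilizer G γ ⊓ stabilizer G δ :=
  Subgroup.eq_of_le_of_card_ge h (by rw [hqt α β hαβ, hqt γ δ hγδ])

variable [Finite Ω]

theorem card_stabilizer_dvd_mul_ncard_diff_singleton (hqt : TwoPointStabilizersHaveCard G Ω t)
    {α : Ω} {S : Set Ω} (hS : ∀ g ∈ stabilizer G α, ∀ x ∈ S, g • x ∈ S) :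
    Nat.card (stabilizer G α) ∣ t * (S \ {α}).ncard := by
  refine (stabilizer G α).card_dvd_mul_ncard (fun g hg x hx => ⟨hS g hg x hx.1, ?_⟩)
    fun x hx => hqt α x (Ne.symm hx.2)
  rw [Set.mem_singleton_iff, ← (mem_stabilizer_iff.mp hg), smul_left_cancel_iff]
  exact hx.2

theorem smul_eq_of_isBlock (hqt : TwoPointStabilizersHaveCard G Ω t) {C D : Set Ω}
    (hC : IsBlock G C) (hD : IsBlock G D) (hCD : C.ncard = D.ncard) {α γ δ : Ω}
    (hαD : α ∈ D) (hαC : α ∉ C) (hγC : γ ∈ C) (hδC : δ ∈ C) {g : G} (hgα : g • α = α)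
    (hgγ : g • γ = γ) : g • δ = δ := by
  set H := stabilizer G α ⊓ stabilizer G C
  have hne : ∀ x ∈ C, α ≠ x := fun x hx h => hαC (h ▸ hx)
  have hHα : Nat.card (stabilizer G α) ∣ t * (D.ncard - 1) := by
    rw [← Set.ncard_sdiff_singleton_of_mem hαD]
    exact card_stabilizer_dvd_mul_ncard_diff_singleton hqt fun g hg x hx => by
      rw [← hD.stabilizer_le hαD hg]; exact Set.smul_mem_smul_set hx
  have hHC : Nat.card H ∣ t * C.ncard := by
    refine H.card_dvd_mul_ncard (fun g hg x hx => ?_) fun x hx => ?_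
    · rw [← mem_stabilizer_iff.mp hg.2]; exact Set.smul_mem_smul_set hx
    · rw [inf_assoc, inf_eq_right.mpr (hC.stabilizer_le hx), hqt α x (hne x hx)]
  have hδ : stabilizer G α ⊓ stabilizer G δ ≤ H := inf_le_inf_left _ (hC.stabilizer_le hδC)
  obtain ⟨f, hf⟩ := (hqt α δ (hne δ hδC)) ▸ Subgroup.card_dvd_of_le hδ
  have ht : 0 < t := hqt α δ (hne δ hδC) ▸ Nat.card_pos
  have hf₁ : f ∣ C.ncard - 1 := by
    refine Nat.dvd_of_mul_dvd_mul_left ht ?_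
    rw [hCD, ← hf]
    exact (Subgroup.card_dvd_of_le inf_le_left).trans hHα
  have hf₂ : f ∣ C.ncard := Nat.dvd_of_mul_dvd_mul_left ht (hf ▸ hHC)
  have hf₃ : f = 1 := by
    have := Nat.dvd_sub hf₂ hf₁
    rwa [Nat.sub_sub_self ((Set.ncard_pos).mpr ⟨γ, hγC⟩), Nat.dvd_one] at this
  have hH : stabilizer G α ⊓ stabilizer G δ = H :=
    Subgroup.eq_of_le_of_card_ge hδ (by rw [hf, hf₃, mul_one, hqt α δ (hne δ hδC)])
  have hgH : g ∈ H := ⟨hgα, hC.stabilizer_le hγC hgγ⟩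
  exact (hH ▸ hgH).2

theorem smul_eq_of_mem_stabilizer_inf_of_isBlock [IsPretransitive G Ω]
    (hqt : TwoPointStabilizersHaveCard G Ω t) {B : Set Ω} (hB : IsBlock G B)
    (hBnt : B.Nontrivial) (hBne : B ≠ Set.univ) {x y : Ω} (hxy : x ≠ y)
    {g : G} (hg : g ∈ stabilizer G x ⊓ stabilizer G y) (z : Ω) : g • z = z := by
  have hcover : ∀ a : Ω, ∃ k : G, a ∈ k • B := fun a => by
    obtain ⟨b, hb⟩ := hBnt.nonempty
    obtain ⟨k, rfl⟩ := exists_smul_eq G b a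
    exact ⟨k, Set.smul_mem_smul_set hb⟩
  obtain ⟨k, hxC⟩ := hcover x
  obtain ⟨ε, hε⟩ : ∃ ε, ε ∉ k • B := by
    by_contra! h
    exact hBne (by rw [← inv_smul_smul k B, Set.eq_univ_of_forall h, Set.smul_set_univ])
  obtain ⟨x', hx'C, hx'x⟩ := Set.exists_ne_of_one_lt_ncard (s := k • B)
    (by rw [Set.ncard_smul_set]; exact (Set.one_lt_ncard_iff_nontrivial).mpr hBnt) x
  have hne : ∀ σ, σ ∉ k • B → x ≠ σ := fun σ hσ h => hσ (h ▸ hxC)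
  have hstab_eq : ∀ σ ∉ k • B, ∀ ρ ∈ k • B, ρ ≠ x →
      stabilizer G x ⊓ stabilizer G σ = stabilizer G x ⊓ stabilizer G ρ := by
    intro σ hσ ρ hρ hρx
    obtain ⟨l, hσD⟩ := hcover σ
    refine stabilizer_inf_eq_of_le hqt (hne σ hσ) hρx.symm fun h hh => ⟨hh.1, ?_⟩
    exact smul_eq_of_isBlock hqt (hB.translate k) (hB.translate l)
      (by rw [Set.ncard_smul_set, Set.ncard_smul_set]) hσD hσ hxC hρ hh.2 hh.1
  have hstab_eq_ε : ∀ σ, x ≠ σ →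
      stabilizer G x ⊓ stabilizer G σ = stabilizer G x ⊓ stabilizer G ε := by
    intro σ hσ
    by_cases hσC : σ ∈ k • B
    · exact (hstab_eq ε hε σ hσC hσ.symm).symm
    · exact (hstab_eq σ hσC x' hx'C hx'x).trans (hstab_eq ε hε x' hx'C hx'x).symm
  by_cases hzx : x = z
  · exact hzx ▸ hg.1
  · rw [hstab_eq_ε y hxy, ← hstab_eq_ε z hzx] at hg
    exact hg.2

theorem card_stabilizer_eq_mul_ncard_orbit (hqt : TwoPointStabilizersHaveCard G Ω t) {a ω : Ω}
    (hfix : ∀ ρ ∈ orbit G a, ∀ σ ∈ orbit G a, ρ ≠ σ →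
      stabilizer G ρ ⊓ stabilizer G σ ≤ fixingSubgroup G (orbit G a))
    {α β : Ω} (hα : α ∈ orbit G a) (hβ : β ∈ orbit G a) (hαβ : α ≠ β)
    {z : G} (hz : z ∈ stabilizer G α ⊓ stabilizer G β) (hzω : z • ω ≠ ω) :
    Nat.card (stabilizer G ω) = t * (orbit G a).ncard := by
  set N := stabilizer G α ⊓ stabilizer G β ⊓ stabilizer G ω
  have hne : ∀ ρ ∈ orbit G a, ρ ≠ ω := fun ρ hρ h =>
    hzω ((mem_fixingSubgroup_iff G).mp (hfix α hα β hβ hαβ hz) ω (h ▸ hρ))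
  have hN : 2 * Nat.card N ≤ t := by
    obtain ⟨k, hk⟩ := hqt α β hαβ ▸ Subgroup.card_dvd_of_le (inf_le_left : N ≤ _)
    rcases k with _ | _ | k
    · exact absurd (hqt α β hαβ ▸ hk) Nat.card_pos.ne'
    · have hNK := Subgroup.eq_of_le_of_card_ge (inf_le_left : N ≤ _)
        (by rw [hqt α β hαβ, hk]; omega)
      exact absurd (hNK ▸ hz).2 hzω
    · rw [hk]; nlinarith
  have hΔ := Set.toFinite (orbit G a)
  have hlower : (orbit G a).ncard * (t - Nat.card N) + Nat.card N ≤
      Nat.card (stabilizer G ω) := by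
    have := Subgroup.sum_card_sub_card_add_card_le hΔ.toFinset
      (fun ρ => stabilizer G ρ ⊓ stabilizer G ω) (N := N) (fun _ _ => inf_le_right)
      inf_le_right
      fun ρ hρ σ hσ hρσ g hg => by
        rw [Set.Finite.mem_toFinset] at hρ hσ
        have hgΔ := (mem_fixingSubgroup_iff G).mp (hfix ρ hρ σ hσ hρσ ⟨hg.1.1, hg.2.1⟩)
        exact ⟨⟨hgΔ α hα, hgΔ β hβ⟩, hg.1.2⟩
    rwa [Finset.sum_congr rfl fun ρ hρ => by rw [hqt ρ ω (hne ρ (hΔ.mem_toFinset.mp hρ))],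
      Finset.sum_const, smul_eq_mul, ← Set.ncard_eq_toFinset_card _ hΔ] at this
  obtain ⟨k, hk⟩ := (stabilizer G ω).card_dvd_mul_ncard
    (fun g _ x hx => mem_orbit_of_mem_orbit g hx) fun ρ hρ => hqt ω ρ (hne ρ hρ).symm
  have hn : 0 < (orbit G a).ncard := (Set.ncard_pos).mpr ⟨α, hα⟩
  have hu : 0 < Nat.card N := Nat.card_pos
  obtain ⟨s, rfl⟩ : ∃ s, t = Nat.card N + s := ⟨t - Nat.card N, by omega⟩
  rw [Nat.add_sub_cancel_left] at hlower
  rcases k with _ | _ | k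
  · simp at hk; omega
  · simpa using hk.symm
  · nlinarith

theorem orbit_subsingleton_of_stabilizer_inf_le_fixingSubgroup [FaithfulSMul G Ω]
    (hqt : TwoPointStabilizersHaveCard G Ω t) (ht : 1 < t) {a : Ω}
    (hfix : ∀ ρ ∈ orbit G a, ∀ σ ∈ orbit G a, ρ ≠ σ →
      stabilizer G ρ ⊓ stabilizer G σ ≤ fixingSubgroup G (orbit G a)) :
    (orbit G a).Subsingleton := by
  intro α hα β hβ
  by_contra hαβ
  obtain ⟨z, hz, hz1⟩ := (stabilizer G α ⊓ stabilizer G β).bot_or_exists_ne_one.resolve_left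
    fun h => by have := hqt α β hαβ; rw [h, Subgroup.card_bot] at this; omega
  obtain ⟨ω, hω⟩ : ∃ ω : Ω, z • ω ≠ ω :=
    not_forall.mp fun h => hz1 (eq_of_smul_eq_smul fun ω => by rw [h ω, one_smul])
  have hGω := card_stabilizer_eq_mul_ncard_orbit hqt hfix hα hβ hαβ hz hω
  have hn : 1 < (orbit G a).ncard := (Set.one_lt_ncard_iff).mpr ⟨α, β, hα, hβ, hαβ⟩
  have hm : 1 < (orbit G ω).ncard :=
    (Set.one_lt_ncard_iff).mpr ⟨z • ω, ω, mem_orbit ω z, mem_orbit_self ω, hω⟩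
  have hGα : Nat.card (stabilizer G α) = t * (orbit G ω).ncard := by
    have h₁ := (stabilizer G α).index_mul_card
    have h₂ := (stabilizer G ω).index_mul_card
    rw [index_stabilizer, orbit_eq_iff.mpr hα] at h₁
    rw [index_stabilizer, hGω] at h₂
    refine Nat.eq_of_mul_eq_mul_left (by omega : 0 < (orbit G a).ncard) ?_
    rw [h₁, ← h₂]; ring
  have hmn := card_stabilizer_dvd_mul_ncard_diff_singleton hqt (α := α) (S := orbit G a)
    fun g _ x hx => mem_orbit_of_mem_orbit g hx
  have hnm := card_stabilizer_dvd_mul_ncard_diff_singleton hqt (α := ω) (S := orbit G ω)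
    fun g _ x hx => mem_orbit_of_mem_orbit g hx
  rw [hGα, Set.ncard_sdiff_singleton_of_mem hα] at hmn
  rw [hGω, Set.ncard_sdiff_singleton_of_mem (mem_orbit_self ω)] at hnm
  have := Nat.le_of_dvd (by omega) (Nat.dvd_of_mul_dvd_mul_left (by omega) hmn)
  have := Nat.le_of_dvd (by omega) (Nat.dvd_of_mul_dvd_mul_left (by omega) hnm)
  omega

end

theorem quasiTransitive_intransitive_preprimitive_on_orbits_general
    {G Ω : Type*} [Group G] [Fintype G] [Fintype Ω] [MulAction G Ω] [FaithfulSMul G Ω]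
    (t : ℕ) (ht : 1 < t)
    (hqt : ∀ α β : Ω, α ≠ β →
      Nat.card ↥(MulAction.stabilizer G α ⊓ MulAction.stabilizer G β) = t) :
    ∀ α : Ω, MulAction.IsPretransitive G ↥(MulAction.orbit G α) ∧
      ∀ B : Set ↥(MulAction.orbit G α), MulAction.IsBlock G B →
        MulAction.IsTrivialBlock B := by
  intro a
  refine ⟨inferInstance, fun B hB => ?_⟩
  by_contra hBt
  rw [IsTrivialBlock, not_or, Set.not_subsingleton_iff] at hBt
  have hqtΔ : TwoPointStabilizersHaveCard G (orbit G a) t := fun x y hxy => by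
    rw [stabilizer_coe_orbit, stabilizer_coe_orbit]
    exact hqt x y (Subtype.coe_ne_coe.mpr hxy)
  have hfix : ∀ ρ ∈ orbit G a, ∀ σ ∈ orbit G a, ρ ≠ σ →
      stabilizer G ρ ⊓ stabilizer G σ ≤ fixingSubgroup G (orbit G a) := by
    refine fun ρ hρ σ hσ hρσ g hg => (mem_fixingSubgroup_iff G).mpr fun ζ hζ => ?_
    have hg' :
        g ∈ stabilizer G (⟨ρ, hρ⟩ : orbit G a) ⊓ stabilizer G (⟨σ, hσ⟩ : orbit G a) := by
      rwa [stabilizer_coe_orbit, stabilizer_coe_orbit]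
    exact congrArg Subtype.val (smul_eq_of_mem_stabilizer_inf_of_isBlock hqtΔ hB hBt.1 hBt.2
      (Subtype.coe_ne_coe.mp hρσ) hg' ⟨ζ, hζ⟩)
  obtain ⟨x, -, y, -, hxy⟩ := hBt.1
  exact hxy <| Subtype.ext <|
    orbit_subsingleton_of_stabilizer_inf_le_fixingSubgroup hqt ht hfix x.2 y.2

/-- A finite quasi-transitive but intransitive group acts primitively on each orbit:
the induced action on each orbit is transitive and every block of this action is trivial
(preprimitivity). -/
theorem quasiTransitive_intransitive_preprimitive_on_orbits
    {G Ω : Type*} [Group G] [Fintype G] [Fintype Ω] [MulAction G Ω] [FaithfulSMul G Ω]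
    (t : ℕ) (ht : 1 < t)
    (hqt : ∀ α β : Ω, α ≠ β →
      Nat.card ↥(MulAction.stabilizer G α ⊓ MulAction.stabilizer G β) = t)
    (hnt : ¬ MulAction.IsPretransitive G Ω) :
    ∀ α : Ω, MulAction.IsPretransitive G ↥(MulAction.orbit G α) ∧
      ∀ B : Set ↥(MulAction.orbit G α), MulAction.IsBlock G B →
        MulAction.IsTrivialBlock B :=
  quasiTransitive_intransitive_preprimitive_on_orbits_general t ht hqt
end

section
/- Let G be a finite group acting quasi-transitively on a finite set Ω. Then G acts 2-transitively on at most one of its orbits: if Δ_1 and Δ_2 are orbits of G on Ω such that the induced action of G on Δ_i is 2-transitive for i = 1, 2, then Δ_1 = Δ_2. -/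
open MulAction

private lemma natcard_orbit_mul_stab {G Ω : Type*} [Group G] [MulAction G Ω] (a : Ω) :
    Nat.card (orbit G a) * Nat.card (stabilizer G a) = Nat.card G :=
  calc Nat.card (orbit G a) * Nat.card (stabilizer G a)
      = Nat.card (orbit G a × stabilizer G a) := (Nat.card_prod _ _).symm
    _ = Nat.card G := Nat.card_congr (orbitProdStabilizerEquivGroup G a)

private lemma stab_sub_card {G Ω : Type*} [Group G] [MulAction G Ω] (a b : Ω) :
    Nat.card (stabilizer (stabilizer G a) b)
      = Nat.card ↥(stabilizer G a ⊓ stabilizer G b) := by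
  have h : stabilizer (stabilizer G a) b
      = (stabilizer G a ⊓ stabilizer G b).subgroupOf (stabilizer G a) := by
    ext ⟨g, hg⟩
    simp [Subgroup.mem_subgroupOf, MulAction.mem_stabilizer_iff, Subgroup.smul_def, hg]
  rw [h]
  exact Nat.card_congr (Subgroup.subgroupOfEquivOfLe inf_le_left).toEquiv

/-- The action of `G` on a subset `Δ` of `Ω` is 2-transitive: any ordered pair of
distinct points of `Δ` can be mapped to any other by an element of `G`. -/
def IsTwoTransitiveOn (G : Type*) {Ω : Type*} [Group G] [MulAction G Ω] (Δ : Set Ω) : Prop :=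
  ∀ a ∈ Δ, ∀ b ∈ Δ, ∀ c ∈ Δ, ∀ d ∈ Δ, a ≠ b → c ≠ d → ∃ g : G, g • a = c ∧ g • b = d

/-- If the orbit of `α` carries a 2-transitive action and contains a point `α' ≠ α`, then
the stabilizer of `α` has order `(|orbit| - 1) * t`. -/
private lemma stab_card_eq {G Ω : Type*} [Group G] [Fintype G] [Fintype Ω] [MulAction G Ω]
    {t : ℕ}
    (hqt : ∀ a b : Ω, a ≠ b →
      Nat.card ↥(MulAction.stabilizer G a ⊓ MulAction.stabilizer G b) = t)
    (α : Ω) (h1 : IsTwoTransitiveOn G (orbit G α))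
    (α' : Ω) (hα' : α' ∈ orbit G α) (hne : α' ≠ α) :
    Nat.card (stabilizer G α) = (Nat.card (orbit G α) - 1) * t := by
  classical
  set H := stabilizer G α
  have horb : orbit H α' = orbit G α \ {α} := by
    ext c
    constructor
    · rintro ⟨⟨g, hg⟩, rfl⟩
      show g • α' ∈ orbit G α \ {α}
      refine ⟨?_, ?_⟩
      · have : orbit G α' = orbit G α := MulAction.orbit_eq_iff.mpr hα'
        rw [← this]; exact mem_orbit _ _
      · intro hcα
        have h1' : g • α' = α := hcα
        have hgα : g • α = α := hg
        have h2' : g • α' = g • α := by rw [h1', hgα]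
        exact hne (smul_left_cancel g h2')
    · rintro ⟨hc, hcα⟩
      have hcα' : (α : Ω) ≠ c := fun h => hcα (by simp [← h])
      obtain ⟨g, hg1, hg2⟩ := h1 α (mem_orbit_self α) α' hα' α (mem_orbit_self α) c hc
        (Ne.symm hne) hcα'
      exact ⟨⟨g, hg1⟩, hg2⟩
  have hcard : Nat.card (orbit H α') = Nat.card (orbit G α) - 1 := by
    rw [horb, Nat.card_coe_set_eq, Nat.card_coe_set_eq,
      Set.ncard_diff_singleton_of_mem (mem_orbit_self α)]
  have hos := natcard_orbit_mul_stab (G := H) (Ω := Ω) α'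
  rw [hcard, stab_sub_card, hqt α α' (Ne.symm hne)] at hos
  exact hos.symm

/-- A finite quasi-transitive group acts 2-transitively on at most one of its orbits. -/
theorem quasiTransitive_at_most_one_two_transitive_orbit
    {G Ω : Type*} [Group G] [Fintype G] [Fintype Ω] [MulAction G Ω] [FaithfulSMul G Ω]
    (t : ℕ) (ht : 1 < t)
    (hqt : ∀ α β : Ω, α ≠ β →
      Nat.card ↥(MulAction.stabilizer G α ⊓ MulAction.stabilizer G β) = t)
    (α β : Ω)
    (h1 : IsTwoTransitiveOn G (MulAction.orbit G α))
    (h2 : IsTwoTransitiveOn G (MulAction.orbit G β)) :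
    MulAction.orbit G α = MulAction.orbit G β := by
  classical
  by_contra hne
  have hdisj : Disjoint (orbit G α) (orbit G β) :=
    (orbit.eq_or_disjoint α β).resolve_left hne
  have hαβ : α ≠ β := by
    rintro rfl; exact hne rfl
  -- every point stabilizer has order > t
  have hcard_lt : ∀ γ : Ω, t < Nat.card (stabilizer G γ) := by
    intro γ
    obtain ⟨δ, hδ⟩ : ∃ δ : Ω, δ ≠ γ := by
      rcases eq_or_ne γ α with rfl | h
      · exact ⟨β, Ne.symm hαβ⟩
      · exact ⟨α, Ne.symm h⟩
    have hle : t ≤ Nat.card (stabilizer G γ) := by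
      rw [← hqt γ δ (Ne.symm hδ)]
      exact Subgroup.card_le_of_le inf_le_left
    refine lt_of_le_of_ne hle fun heq => ?_
    have hfix : ∀ g ∈ stabilizer G γ, ∀ ω : Ω, g • ω = ω := by
      intro g hg ω
      rcases eq_or_ne ω γ with rfl | hω
      · exact hg
      · have hinf : stabilizer G γ ⊓ stabilizer G ω = stabilizer G γ := by
          refine Subgroup.eq_of_le_of_card_ge inf_le_left ?_
          rw [hqt γ ω (Ne.symm hω)]; exact heq.ge
        have : g ∈ stabilizer G γ ⊓ stabilizer G ω := hinf.symm ▸ hg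
        exact this.2
    have hbot : stabilizer G γ = ⊥ := by
      ext g
      simp only [Subgroup.mem_bot]
      constructor
      · intro hg
        exact FaithfulSMul.eq_of_smul_eq_smul fun ω => by
          rw [hfix g hg ω, one_smul]
      · rintro rfl; exact (stabilizer G γ).one_mem
    rw [hbot, Subgroup.card_bot] at heq
    omega
  -- each 2-transitive orbit that matters has a second point
  have hex : ∀ γ : Ω, (∃ δ : Ω, δ ≠ γ) → ∃ γ' : Ω, γ' ∈ orbit G γ ∧ γ' ≠ γ := by
    intro γ ⟨δ, hδ⟩
    by_contra h
    push_neg at h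
    have htop : stabilizer G γ = ⊤ := by
      ext g
      simp only [Subgroup.mem_top, iff_true, mem_stabilizer_iff]
      exact h (g • γ) (mem_orbit γ g)
    have := hqt γ δ (Ne.symm hδ)
    rw [htop, top_inf_eq] at this
    exact absurd this (hcard_lt δ).ne'
  obtain ⟨α', hα'mem, hα'ne⟩ := hex α ⟨β, Ne.symm hαβ⟩
  obtain ⟨β', hβ'mem, hβ'ne⟩ := hex β ⟨α, hαβ⟩
  set n₁ := Nat.card (orbit G α)
  set n₂ := Nat.card (orbit G β)
  have hH1 : Nat.card (stabilizer G α) = (n₁ - 1) * t := stab_card_eq hqt α h1 α' hα'mem hα'ne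
  have hH2 : Nat.card (stabilizer G β) = (n₂ - 1) * t := stab_card_eq hqt β h2 β' hβ'mem hβ'ne
  have ht0 : 0 < t := by omega
  have hn1 : 3 ≤ n₁ := by
    have := hcard_lt α
    rw [hH1] at this
    rcases Nat.lt_or_ge n₁ 3 with h | h
    · interval_cases n₁ <;> omega
    · exact h
  have hn2 : 3 ≤ n₂ := by
    have := hcard_lt β
    rw [hH2] at this
    rcases Nat.lt_or_ge n₂ 3 with h | h
    · interval_cases n₂ <;> omega
    · exact h
  have hG1 : n₁ * ((n₁ - 1) * t) = Nat.card G := by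
    rw [← hH1]; exact natcard_orbit_mul_stab α
  have hG2 : n₂ * ((n₂ - 1) * t) = Nat.card G := by
    rw [← hH2]; exact natcard_orbit_mul_stab β
  have hn12 : n₁ = n₂ := by
    have h12 : n₁ * (n₁ - 1) = n₂ * (n₂ - 1) := by
      have := hG1.trans hG2.symm
      rw [← mul_assoc, ← mul_assoc] at this
      exact Nat.eq_of_mul_eq_mul_right ht0 this
    rcases lt_trichotomy n₁ n₂ with h | h | h
    · exact absurd h12 (Nat.mul_lt_mul_of_lt_of_le h (by omega) (by omega)).ne
    · exact h
    · exact absurd h12.symm (Nat.mul_lt_mul_of_lt_of_le h (by omega) (by omega)).ne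
  -- orbits of the stabilizer of α on the orbit of β
  set H := stabilizer G α
  have horbsub : ∀ b ∈ orbit G β, orbit H b ⊆ orbit G β := by
    intro b hb c hc
    obtain ⟨⟨g, hg⟩, rfl⟩ := hc
    have : orbit G b = orbit G β := MulAction.orbit_eq_iff.mpr hb
    rw [← this]
    exact mem_orbit b g
  have horbcard : ∀ b ∈ orbit G β, Nat.card (orbit H b) = n₁ - 1 := by
    intro b hb
    have hab : α ≠ b := by
      intro h
      exact (hdisj.ne_of_mem (mem_orbit_self α) hb) h
    have hos := natcard_orbit_mul_stab (G := H) (Ω := Ω) b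
    rw [stab_sub_card, hqt α b hab, hH1] at hos
    exact Nat.eq_of_mul_eq_mul_right ht0 hos
  -- pick a point of orbit G β outside orbit H β
  obtain ⟨c, hc, hcβ⟩ : ∃ c ∈ orbit G β, c ∉ orbit H β := by
    by_contra h
    push_neg at h
    have hsub : orbit G β ⊆ orbit H β := h
    have : n₂ ≤ n₁ - 1 := by
      have := Set.ncard_le_ncard hsub (Set.toFinite _)
      rwa [← Nat.card_coe_set_eq, ← Nat.card_coe_set_eq,
        horbcard β (mem_orbit_self β)] at this
    omega
  have hdisj2 : Disjoint (orbit H β) (orbit H c) :=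
    (orbit.eq_or_disjoint β c).resolve_left fun h => hcβ (h.symm ▸ mem_orbit_self c)
  have hunion : orbit H β ∪ orbit H c ⊆ orbit G β :=
    Set.union_subset (horbsub β (mem_orbit_self β)) (horbsub c hc)
  have hcardle : (n₁ - 1) + (n₁ - 1) ≤ n₂ := by
    have h1' := Set.ncard_le_ncard hunion (Set.toFinite _)
    rw [Set.ncard_union_eq hdisj2 (Set.toFinite _) (Set.toFinite _)] at h1'
    rwa [← Nat.card_coe_set_eq, ← Nat.card_coe_set_eq, ← Nat.card_coe_set_eq,
      horbcard β (mem_orbit_self β), horbcard c hc] at h1'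
  omega
end

section
/- Let G be a finite group acting faithfully on a finite set Ω such that no non-trivial element of G fixes two distinct points of Ω (i.e., G_{αβ} = 1 for all distinct α, β ∈ Ω). Then G acts regularly on every orbit of Ω with at most one exception: there is at most one orbit Δ of G on Ω such that the stabilizer of some point of Δ is non-trivial. -/
open MulAction Finset

/-- If no non-trivial element of a finite group acting faithfully on a finite set fixes
two distinct points, then the group acts regularly on every orbit with at most one
exception: any two points with non-trivial stabilizer lie in the same orbit. -/
theorem regular_on_all_but_one_orbit_of_trivial_twoPointStabilizers
    {G Ω : Type*} [Group G] [Fintype G] [Fintype Ω] [MulAction G Ω] [FaithfulSMul G Ω]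
    (h1 : ∀ α β : Ω, α ≠ β → MulAction.stabilizer G α ⊓ MulAction.stabilizer G β = ⊥) :
    ∀ α β : Ω, MulAction.stabilizer G α ≠ ⊥ → MulAction.stabilizer G β ≠ ⊥ →
      MulAction.orbit G α = MulAction.orbit G β := by
  classical
  intro α β hα hβ
  by_contra hne
  set N := Fintype.card G with hN
  -- stabilizer finsets
  set St : Ω → Finset G := fun γ => Finset.univ.filter (fun g => g • γ = γ) with hStdef
  set S : Ω → Finset G := fun γ => (St γ).erase 1 with hSdef
  have hmemSt : ∀ γ (g : G), g ∈ St γ ↔ g • γ = γ := by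
    intro γ g; simp [hStdef]
  have hone : ∀ γ, (1 : G) ∈ St γ := fun γ => (hmemSt γ 1).2 (one_smul G γ)
  have hS_card : ∀ γ, (S γ).card = (St γ).card - 1 := by
    intro γ; rw [hSdef]; exact Finset.card_erase_of_mem (hone γ)
  -- card of St equals card of stabilizer
  have hSt_stab : ∀ γ, (St γ).card = Fintype.card (MulAction.stabilizer G γ) := by
    intro γ
    rw [← Nat.card_eq_fintype_card,
      Nat.card_congr (Equiv.subtypeEquivRight (fun g : G => mem_stabilizer_iff)),
      Nat.card_eq_fintype_card, Fintype.card_subtype]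
  -- stabilizer cards are constant on orbits
  have hconst : ∀ γ : Ω, ∀ g : G, (St (g • γ)).card = (St γ).card := by
    intro γ g
    apply Finset.card_bij (fun x _ => g⁻¹ * x * g)
    · intro x hx
      rw [hmemSt] at hx ⊢
      rw [mul_smul, mul_smul, hx, inv_smul_eq_iff]
    · intro x hx y hy h
      simpa using h
    · intro y hy
      refine ⟨g * y * g⁻¹, ?_, by group⟩
      rw [hmemSt] at hy ⊢
      rw [mul_smul, mul_smul, inv_smul_smul, hy]
  -- the S γ are pairwise disjoint
  have hSdisj : ∀ γ δ : Ω, γ ≠ δ → Disjoint (S γ) (S δ) := by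
    intro γ δ hγδ
    rw [Finset.disjoint_left]
    intro g hg hg'
    rw [hSdef, Finset.mem_erase, hmemSt] at hg hg'
    have : g ∈ MulAction.stabilizer G γ ⊓ MulAction.stabilizer G δ :=
      ⟨mem_stabilizer_iff.2 hg.2, mem_stabilizer_iff.2 hg'.2⟩
    rw [h1 γ δ hγδ, Subgroup.mem_bot] at this
    exact hg.1 this
  -- orbits as finsets
  set Oa := (MulAction.orbit G α).toFinset with hOa
  set Ob := (MulAction.orbit G β).toFinset with hOb
  have horbdisj : Disjoint (MulAction.orbit G α) (MulAction.orbit G β) :=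
    (MulAction.orbit.eq_or_disjoint α β).resolve_left hne
  have hOdisj : Disjoint Oa Ob := by
    rw [hOa, hOb, Set.disjoint_toFinset]; exact horbdisj
  -- sum of card (S γ) over an orbit
  have horbitsum : ∀ γ : Ω, ∑ δ ∈ (MulAction.orbit G γ).toFinset, (S δ).card
      = ((MulAction.orbit G γ).toFinset).card * ((St γ).card - 1) := by
    intro γ
    rw [Finset.sum_congr rfl (fun δ hδ => ?_), Finset.sum_const, smul_eq_mul]
    rw [Set.mem_toFinset, MulAction.mem_orbit_iff] at hδ
    obtain ⟨g, rfl⟩ := hδ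
    rw [hS_card, hconst]
  -- orbit–stabilizer
  have hOS : ∀ γ : Ω, ((MulAction.orbit G γ).toFinset).card * (St γ).card = N := by
    intro γ
    rw [Set.toFinset_card, hSt_stab, hN]
    exact MulAction.card_orbit_mul_card_stabilizer_eq_card_group G γ
  -- non-trivial stabilizers have at least 2 elements
  have htwo : ∀ γ : Ω, MulAction.stabilizer G γ ≠ ⊥ → 2 ≤ (St γ).card := by
    intro γ hγ
    obtain ⟨⟨g, hg⟩, hg1⟩ := Subgroup.ne_bot_iff_exists_ne_one.1 hγ
    have hg1' : g ≠ 1 := by simpa [Subtype.ext_iff] using hg1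
    exact Finset.one_lt_card.2 ⟨g, (hmemSt γ g).2 hg, 1, hone γ, hg1'⟩
  -- main counting
  have hsub : (Oa ∪ Ob).biUnion S ⊆ Finset.univ.erase 1 := by
    intro g hg
    rw [Finset.mem_biUnion] at hg
    obtain ⟨γ, _, hg⟩ := hg
    rw [hSdef, Finset.mem_erase] at hg
    exact Finset.mem_erase.2 ⟨hg.1, Finset.mem_univ g⟩
  have hcount : ∑ γ ∈ Oa ∪ Ob, (S γ).card ≤ N - 1 := by
    calc ∑ γ ∈ Oa ∪ Ob, (S γ).card = ((Oa ∪ Ob).biUnion S).card :=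
          (Finset.card_biUnion (fun γ _ δ _ h => hSdisj γ δ h)).symm
      _ ≤ (Finset.univ.erase 1).card := Finset.card_le_card hsub
      _ = N - 1 := by rw [Finset.card_erase_of_mem (Finset.mem_univ 1), Finset.card_univ]
  rw [Finset.sum_union hOdisj, horbitsum, horbitsum] at hcount
  -- put everything together
  have ha := hOS α
  have hb := hOS β
  have h2a := htwo α hα
  have h2b := htwo β hβ
  have hamul : Oa.card * ((St α).card - 1) = N - Oa.card := by
    rw [Nat.mul_sub, mul_one, ha]
  have hbmul : Ob.card * ((St β).card - 1) = N - Ob.card := by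
    rw [Nat.mul_sub, mul_one, hb]
  have h2a' : 2 * Oa.card ≤ N := by
    calc 2 * Oa.card = Oa.card * 2 := mul_comm _ _
      _ ≤ Oa.card * (St α).card := Nat.mul_le_mul_left _ h2a
      _ = N := ha
  have h2b' : 2 * Ob.card ≤ N := by
    calc 2 * Ob.card = Ob.card * 2 := mul_comm _ _
      _ ≤ Ob.card * (St β).card := Nat.mul_le_mul_left _ h2b
      _ = N := hb
  have hapos : 1 ≤ Oa.card := Finset.card_pos.2 ⟨α, Set.mem_toFinset.2 (MulAction.mem_orbit_self α)⟩
  have hbpos : 1 ≤ Ob.card := Finset.card_pos.2 ⟨β, Set.mem_toFinset.2 (MulAction.mem_orbit_self β)⟩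
  rw [hamul, hbmul] at hcount
  omega
end
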